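/- Let Q be an n×n real matrix with positive definite quadratic form and let c > 0. Then (1/2)(c + det(Q)/c) ≥ √(det((Q+Qᵀ)/2)), with equality if and only if Q is symmetric and det(Q) = c². -/

import Mathlib

open Matrix


lemma antisym_quad {n : ℕ} {C : Matrix (Fin n) (Fin n) ℝ} (hC : Cᵀ = -C) (x : Fin n → ℝ) :
    x ⬝ᵥ (C *ᵥ x) = 0 := by
  have h1 : x ⬝ᵥ (C *ᵥ x) = (Cᵀ *ᵥ x) ⬝ᵥ x := by
    rw [Matrix.dotProduct_mulVec, Matrix.mulVec_transpose]
  rw [hC] at h1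
  have h2 : ((-C) *ᵥ x) ⬝ᵥ x = -(x ⬝ᵥ (C *ᵥ x)) := by
    rw [Matrix.neg_mulVec, neg_dotProduct, dotProduct_comm]
  linarith [h1, h2]

lemma det_one_add_antisym_pos {n : ℕ} {C : Matrix (Fin n) (Fin n) ℝ} (hC : Cᵀ = -C) :
    0 < (1 + C).det := by
  have hne : ∀ t : ℝ, (1 + t • C).det ≠ 0 := by
    intro t h
    obtain ⟨v, hv, hv0⟩ := (Matrix.exists_mulVec_eq_zero_iff).mpr h
    have h1 : v ⬝ᵥ ((1 + t • C) *ᵥ v) = 0 := by rw [hv0]; simp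
    rw [Matrix.add_mulVec, Matrix.one_mulVec, dotProduct_add] at h1
    have htC : (t • C)ᵀ = -(t • C) := by rw [Matrix.transpose_smul, hC, smul_neg]
    rw [antisym_quad htC v, add_zero, dotProduct_self_eq_zero] at h1
    exact hv h1
  have hcont : Continuous fun t : ℝ => (1 + t • C).det :=
    (continuous_const.add (continuous_id.smul continuous_const)).matrix_det
  by_contra hle
  push_neg at hle
  have hlt : (1 + (1:ℝ) • C).det < 0 := by
    rcases lt_or_eq_of_le hle with h | h
    · simpa using h
    · exact absurd h (by simpa using hne 1)
  have h0 : (1 + (0:ℝ) • C).det = 1 := by simp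
  have := intermediate_value_Icc' (by norm_num : (0:ℝ) ≤ 1) hcont.continuousOn
  have h0mem : (0:ℝ) ∈ Set.Icc ((1 + (1:ℝ) • C).det) ((1 + (0:ℝ) • C).det) := by
    constructor <;> [exact hlt.le; simp [h0]]
  obtain ⟨t, _, ht⟩ := this h0mem
  exact hne t ht



lemma prod_one_le_aux {ι : Type*} {s : Finset ι} {f : ι → ℝ} (h : ∀ i ∈ s, 1 ≤ f i) :
    1 ≤ ∏ i ∈ s, f i ∧ (∏ i ∈ s, f i = 1 → ∀ i ∈ s, f i = 1) := by
  classical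
  induction s using Finset.induction with
  | empty => simp
  | @insert j s hj ih =>
    have hfj : 1 ≤ f j := h j (Finset.mem_insert_self j s)
    obtain ⟨h1, h2⟩ := ih (fun i hi => h i (Finset.mem_insert_of_mem hi))
    rw [Finset.prod_insert hj]
    constructor
    · nlinarith
    · intro he
      have hfj1 : f j = 1 := by nlinarith
      have hp1 : ∏ i ∈ s, f i = 1 := by rw [hfj1, one_mul] at he; exact he
      intro i hi
      rcases Finset.mem_insert.mp hi with rfl | hi
      · exact hfj1
      · exact h2 hp1 i hi

lemma psd_det_one_add {n : ℕ} {P : Matrix (Fin n) (Fin n) ℝ} (hP : P.PosSemidef) :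
    1 ≤ (1 + P).det ∧ ((1 + P).det = 1 → P = 0) := by
  have hH := hP.isHermitian
  set U : Matrix (Fin n) (Fin n) ℝ := (hH.eigenvectorUnitary : Matrix (Fin n) (Fin n) ℝ) with hU
  have hUU : U * star U = 1 := (Matrix.mem_unitaryGroup_iff).mp hH.eigenvectorUnitary.2
  have hspec : P = U * Matrix.diagonal (RCLike.ofReal ∘ hH.eigenvalues) * star U :=
    hH.spectral_theorem
  have hone : (1 : Matrix (Fin n) (Fin n) ℝ) + P
      = U * (1 + Matrix.diagonal (RCLike.ofReal ∘ hH.eigenvalues)) * star U := by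
    rw [mul_add, add_mul, mul_one, hUU, ← hspec]
  have hdetU : U.det * (star U).det = 1 := by rw [← Matrix.det_mul, hUU, Matrix.det_one]
  have hdet : (1 + P).det = ∏ i, (1 + hH.eigenvalues i) := by
    rw [hone, Matrix.det_mul, Matrix.det_mul]
    have : (1 : Matrix (Fin n) (Fin n) ℝ) + Matrix.diagonal (RCLike.ofReal ∘ hH.eigenvalues)
        = Matrix.diagonal (fun i => 1 + hH.eigenvalues i) := by
      rw [← Matrix.diagonal_one, Matrix.diagonal_add]
      congr 1
    rw [this, Matrix.det_diagonal, mul_right_comm, hdetU, one_mul]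
  have hnn : ∀ i ∈ (Finset.univ : Finset (Fin n)), (1:ℝ) ≤ 1 + hH.eigenvalues i :=
    fun i _ => by linarith [hP.eigenvalues_nonneg i]
  obtain ⟨hge, heq⟩ := prod_one_le_aux hnn
  constructor
  · rw [hdet]; exact hge
  · intro h
    rw [hdet] at h
    have hall := heq h
    have heig : (RCLike.ofReal ∘ hH.eigenvalues : Fin n → ℝ) = fun _ => 0 := by
      funext i
      have := hall i (Finset.mem_univ i)
      simp only [Function.comp_apply, RCLike.ofReal_real_eq_id, id_eq]
      linarith
    rw [hspec, heig]
    simp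

/-- Pointwise calibration inequality: for `Q` with positive definite quadratic form and `c > 0`,
`(1/2)(c + det Q / c) ≥ √(det((Q+Qᵀ)/2))`, with equality iff `Q` is symmetric and `det Q = c²`. -/
theorem stmt3 (n : ℕ) (Q : Matrix (Fin n) (Fin n) ℝ) (c : ℝ) (hc : 0 < c)
    (hQ : ∀ x : Fin n → ℝ, x ≠ 0 → 0 < x ⬝ᵥ (Q *ᵥ x)) :
    Real.sqrt (((1 / 2 : ℝ) • (Q + Qᵀ)).det) ≤ (1 / 2) * (c + Q.det / c) ∧
      ((1 / 2) * (c + Q.det / c) = Real.sqrt (((1 / 2 : ℝ) • (Q + Qᵀ)).det) ↔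
        Q = Qᵀ ∧ Q.det = c ^ 2) := by
  classical
  set S : Matrix (Fin n) (Fin n) ℝ := (1/2 : ℝ) • (Q + Qᵀ) with hSdef
  set A : Matrix (Fin n) (Fin n) ℝ := (1/2 : ℝ) • (Q - Qᵀ) with hAdef
  have hQSA : Q = S + A := by
    rw [hSdef, hAdef]; ext i j
    simp only [Matrix.add_apply, Matrix.smul_apply, Matrix.sub_apply, Matrix.transpose_apply,
      smul_eq_mul]
    ring
  have hAT : Aᵀ = -A := by
    rw [hAdef]; ext i j
    simp only [Matrix.transpose_apply, Matrix.smul_apply, Matrix.sub_apply, Matrix.neg_apply,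
      smul_eq_mul]
    ring
  have hST : Sᵀ = S := by
    rw [hSdef]; ext i j
    simp only [Matrix.transpose_apply, Matrix.smul_apply, Matrix.add_apply, smul_eq_mul]
    ring
  have hquad : ∀ x : Fin n → ℝ, x ⬝ᵥ (S *ᵥ x) = x ⬝ᵥ (Q *ᵥ x) := by
    intro x
    conv_rhs => rw [hQSA]
    rw [Matrix.add_mulVec, dotProduct_add, antisym_quad hAT, add_zero]
  have hSpd : S.PosDef := by
    refine Matrix.posDef_iff_dotProduct_mulVec.mpr ⟨?_, ?_⟩
    · show Sᴴ = S
      have : Sᴴ = Sᵀ := by ext i j; simp [Matrix.conjTranspose_apply]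
      rw [this, hST]
    · intro x hx
      rw [star_trivial]
      rw [hquad x]
      exact hQ x hx
  have hdetS : 0 < S.det := hSpd.det_pos
  -- square root
  open scoped MatrixOrder Matrix.Norms.L2Operator in
  set R : Matrix (Fin n) (Fin n) ℝ := CFC.sqrt S with hRdef
  open scoped MatrixOrder Matrix.Norms.L2Operator in
  have hRps : R.PosSemidef := (CFC.sqrt_nonneg S).posSemidef
  open scoped MatrixOrder Matrix.Norms.L2Operator in
  have hRR : R * R = S := CFC.sqrt_mul_sqrt_self S hSpd.posSemidef.nonneg
  have hRT : Rᵀ = R := by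
    have := hRps.isHermitian
    rw [Matrix.IsHermitian] at this
    ext i j
    have h := congr_fun (congr_fun this i) j
    simpa [Matrix.conjTranspose_apply] using h
  have hdetR : IsUnit R.det := by
    have h2 : R.det * R.det = S.det := by rw [← Matrix.det_mul, hRR]
    have : R.det ≠ 0 := by intro h; rw [h, mul_zero] at h2; exact hdetS.ne h2
    exact this.isUnit
  set C : Matrix (Fin n) (Fin n) ℝ := R⁻¹ * A * R⁻¹ with hCdef
  have hRinvT : (R⁻¹)ᵀ = R⁻¹ := by rw [Matrix.transpose_nonsing_inv, hRT]
  have hCT : Cᵀ = -C := by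
    rw [hCdef, Matrix.transpose_mul, Matrix.transpose_mul, hRinvT, hAT]
    rw [Matrix.neg_mul, Matrix.mul_neg, Matrix.mul_assoc]
  have hARC : A = R * C * R := by
    rw [hCdef]
    have : R * (R⁻¹ * A * R⁻¹) * R = (R * R⁻¹) * A * (R⁻¹ * R) := by
      simp only [Matrix.mul_assoc]
    rw [this, Matrix.mul_nonsing_inv _ hdetR, Matrix.nonsing_inv_mul _ hdetR, one_mul, mul_one]
  have hQR : Q = R * (1 + C) * R := by
    rw [hQSA]
    rw [Matrix.mul_add, Matrix.add_mul, Matrix.mul_one, hRR, ← hARC]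
  have hdetQ : Q.det = S.det * (1 + C).det := by
    rw [hQR, Matrix.det_mul, Matrix.det_mul, mul_right_comm, ← Matrix.det_mul, hRR]
  have he : 0 < (1 + C).det := det_one_add_antisym_pos hCT
  -- e^2 = det (1 + CᵀC)
  have hCH : Cᴴ = Cᵀ := by ext i j; simp [Matrix.conjTranspose_apply]
  have hPsd : (Cᵀ * C).PosSemidef := by
    have := Matrix.posSemidef_conjTranspose_mul_self C
    rwa [hCH] at this
  have hprod : (1 + C) * (1 + C)ᵀ = 1 + Cᵀ * C := by
    rw [Matrix.transpose_add, Matrix.transpose_one, hCT]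
    noncomm_ring
  have he2 : (1 + C).det ^ 2 = (1 + Cᵀ * C).det := by
    rw [pow_two]
    nth_rewrite 2 [← Matrix.det_transpose (1 + C)]
    rw [← Matrix.det_mul, hprod]
  obtain ⟨hge1, heqcase⟩ := psd_det_one_add hPsd
  have he1 : 1 ≤ (1 + C).det := by nlinarith
  have hSleQ : S.det ≤ Q.det := by rw [hdetQ]; nlinarith
  have hQdet : 0 < Q.det := by rw [hdetQ]; nlinarith
  set s : ℝ := Real.sqrt Q.det with hsdef
  have hs2 : s ^ 2 = Q.det := Real.sq_sqrt hQdet.le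
  have hs0 : 0 ≤ s := Real.sqrt_nonneg _
  have hsqle : Real.sqrt S.det ≤ s := Real.sqrt_le_sqrt hSleQ
  have hd : Q.det / c * c = Q.det := div_mul_cancel₀ _ hc.ne'
  have hamgm : s ≤ 1 / 2 * (c + Q.det / c) := by nlinarith [sq_nonneg (c - s)]
  refine ⟨le_trans hsqle hamgm, ?_, ?_⟩
  · intro hmain
    have h1 : s = 1 / 2 * (c + Q.det / c) := le_antisymm hamgm (hmain.trans_le hsqle)
    have hsc : s = c := by
      have hz : (s - c) ^ 2 = 0 := by nlinarith
      have hz' : s - c = 0 := by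
        exact pow_eq_zero_iff (by norm_num : (2:ℕ) ≠ 0) |>.mp hz
      linarith
    have hQc : Q.det = c ^ 2 := by rw [← hs2, hsc]
    refine ⟨?_, hQc⟩
    have hseq : Real.sqrt S.det = s := hmain.symm.trans h1.symm
    have hSdetQ : S.det = Q.det := by
      have h2 := congrArg (fun x : ℝ => x ^ 2) hseq
      simpa [Real.sq_sqrt hdetS.le, Real.sq_sqrt hQdet.le, hs2] using h2
    have he1' : (1 + C).det = 1 := by
      have h3 : S.det * 1 = S.det * (1 + C).det := by rw [mul_one, ← hdetQ, hSdetQ]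
      exact (mul_left_cancel₀ hdetS.ne' h3).symm
    have hPdet1 : (1 + Cᵀ * C).det = 1 := by rw [← he2, he1']; norm_num
    have hC0 : C = 0 := by
      have hP0 := heqcase hPdet1
      rw [← hCH] at hP0
      exact Matrix.conjTranspose_mul_self_eq_zero.mp hP0
    have hA0 : A = 0 := by rw [hARC, hC0, Matrix.mul_zero, Matrix.zero_mul]
    have hsub : Q - Qᵀ = 0 := by
      rcases smul_eq_zero.mp (hAdef ▸ hA0) with h | h
      · norm_num at h
      · exact h
    exact sub_eq_zero.mp hsub
  · rintro ⟨hsym, hdQ⟩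
    have hSQ : S = Q := by
      rw [hSdef, ← hsym]
      ext i j
      simp only [Matrix.smul_apply, Matrix.add_apply, smul_eq_mul]
      ring
    rw [hSQ, hdQ, Real.sqrt_sq hc.le]
    field_simp
    ring
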